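/- For p ≥ 2 and 1 ≤ l < p, the intervals satisfy the interlacing order J_{p+1,l+1} ≺ J_{p,l} ≺ J_{p+1,l}, i.e., every point of J_{p+1,l+1} is strictly less than every point of J_{p,l}, which is strictly less than every point of J_{p+1,l}. In particular the 2p+1 intervals J_{p+1,p}, J_{p,p−1}, J_{p+1,p−1}, ..., J_{p+1,2}, J_{p,1}, J_{p+1,1} are pairwise disjoint. -/

import Mathlib

open Real

/-- `ε_{p,l} = 0.1` if `2 ≤ p ≤ 4`, and
`ε_{p,l} = min{0.1, (l+0.1)/(3.92p), (p−l+0.1)/(3.92p)}` if `p ≥ 5`. -/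
noncomputable def eps (p l : ℕ) : ℝ :=
  if p ≤ 4 then 0.1
  else min 0.1 (min (((l : ℝ) + 0.1) / (3.92 * p)) (((p : ℝ) - (l : ℝ) + 0.1) / (3.92 * p)))

/-- `J_{p,l} = {2 cos θ : |θ − lπ/p| ≤ ε_{p,l} π/p}`. -/
noncomputable def Jset (p l : ℕ) : Set ℝ :=
  (fun θ : ℝ => 2 * Real.cos θ) ''
    Set.Icc ((l : ℝ) * π / p - eps p l * π / p) ((l : ℝ) * π / p + eps p l * π / p)

/-- The family `𝒥_p = {J_{p,l} : 1 ≤ l < p} ∪ {J_{p+1,l} : 1 ≤ l < p+1}`. -/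
noncomputable def Jfamily (p : ℕ) : Set (Set ℝ) :=
  {S | (∃ l, 1 ≤ l ∧ l < p ∧ S = Jset p l) ∨ (∃ l, 1 ≤ l ∧ l < p + 1 ∧ S = Jset (p + 1) l)}

/-!
On `[0, π]` the map `θ ↦ 2 cos θ` is strictly decreasing, so it suffices to order the angle
intervals `[(l - ε_{p,l}) π / p, (l + ε_{p,l}) π / p]`. After clearing denominators,
`J_{p,l} ≺ J_{p+1,l}` becomes `p ε_{p+1,l} + (p + 1) ε_{p,l} < l`, which holds because
`ε ≤ 0.1` and, for `p ≥ 5`, `p ε_{p,l} ≤ (l + 0.1) / 3.92`. Since `ε_{p,p-l} = ε_{p,l}`, the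
substitution `l ↦ p - l` turns this into `J_{p+1,l+1} ≺ J_{p,l}`. Intervals with the same `p`
are separated because `ε ≤ 0.1 < 1/2`, and together these orderings make the family disjoint.
-/

lemma eps_le (p l : ℕ) : eps p l ≤ 0.1 := by
  unfold eps
  split_ifs
  · exact le_rfl
  · exact min_le_left _ _

lemma eps_nonneg {p l : ℕ} (h : l ≤ p) : 0 ≤ eps p l := by
  have hlp : (l : ℝ) ≤ p := by exact_mod_cast h
  unfold eps
  split_ifs
  · norm_num
  · exact le_min (by norm_num) (le_min (by positivity) (div_nonneg (by linarith) (by positivity)))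

lemma eps_symm {p l : ℕ} (h : l ≤ p) : eps p (p - l) = eps p l := by
  simp only [eps, Nat.cast_sub h, sub_sub_cancel, min_comm (((p : ℝ) - l + 0.1) / _)]

lemma mul_eps_le {p l : ℕ} (hp : 5 ≤ p) : (p : ℝ) * eps p l ≤ (l + 0.1) / 3.92 := by
  have hp0 : (0 : ℝ) < p := by positivity
  have h : eps p l ≤ (l + 0.1) / (3.92 * p) := by
    unfold eps
    rw [if_neg (by omega)]
    exact (min_le_right _ _).trans (min_le_left _ _)
  calc (p : ℝ) * eps p l ≤ p * ((l + 0.1) / (3.92 * p)) := mul_le_mul_of_nonneg_left h hp0.le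
    _ = (l + 0.1) / 3.92 := by field_simp

/-- `Jset.upperEnd_succ_lt_lowerEnd` with the denominators cleared. -/
lemma mul_eps_succ_add_mul_eps_lt {p l : ℕ} (hl : 1 ≤ l) (hlp : l ≤ p) :
    (p : ℝ) * eps (p + 1) l + (p + 1) * eps p l < l := by
  have hl1 : (1 : ℝ) ≤ l := by exact_mod_cast hl
  have hε₁ := eps_le (p + 1) l
  have hε₂ := eps_le p l
  rcases lt_trichotomy p 4 with hp | rfl | hp
  · have hp3 : (p : ℝ) ≤ 3 := by exact_mod_cast (by omega : p ≤ 3)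
    nlinarith
  · have h5 := mul_eps_le (p := 5) (l := l) le_rfl
    have h4 : eps 4 l = 0.1 := by norm_num [eps]
    push_cast at h5 ⊢
    rw [h4]
    linarith
  · have h₁ := mul_eps_le (p := p + 1) (l := l) (by omega)
    have h₂ := mul_eps_le (p := p) (l := l) hp
    have hε₁0 := eps_nonneg (p := p + 1) (l := l) (by omega)
    norm_num at h₁ h₂ hε₂ ⊢
    nlinarith

namespace Jset

/-- The end points of the angle interval of `J_{p,l}`, in units of `π`. -/
noncomputable def lowerEnd (p l : ℕ) : ℝ := (l - eps p l) / p

noncomputable def upperEnd (p l : ℕ) : ℝ := (l + eps p l) / p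

lemma eq_image_Icc (p l : ℕ) :
    Jset p l = (fun θ ↦ 2 * cos θ) '' Set.Icc (lowerEnd p l * π) (upperEnd p l * π) := by
  simp only [Jset, lowerEnd, upperEnd]
  congr 2 <;> ring

lemma lowerEnd_nonneg {p l : ℕ} (hl : 1 ≤ l) : 0 ≤ lowerEnd p l := by
  have hl1 : (1 : ℝ) ≤ l := by exact_mod_cast hl
  exact div_nonneg (by linarith [eps_le p l]) p.cast_nonneg

lemma upperEnd_le_one {p l : ℕ} (hlp : l < p) : upperEnd p l ≤ 1 := by
  have hlp' : (l : ℝ) + 1 ≤ p := by exact_mod_cast hlp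
  exact div_le_one_of_le₀ (by linarith [eps_le p l]) p.cast_nonneg

lemma lowerEnd_mono {p l m : ℕ} (hlm : l ≤ m) (hlp : l ≤ p) : lowerEnd p l ≤ lowerEnd p m := by
  rcases hlm.eq_or_lt with rfl | hlm
  · exact le_rfl
  have hlm' : (l : ℝ) + 1 ≤ m := by exact_mod_cast hlm
  exact div_le_div_of_nonneg_right (by linarith [eps_nonneg hlp, eps_le p m]) p.cast_nonneg

lemma upperEnd_mono {p l m : ℕ} (hlm : l ≤ m) (hmp : m ≤ p) : upperEnd p l ≤ upperEnd p m := by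
  rcases hlm.eq_or_lt with rfl | hlm
  · exact le_rfl
  have hlm' : (l : ℝ) + 1 ≤ m := by exact_mod_cast hlm
  exact div_le_div_of_nonneg_right (by linarith [eps_nonneg hmp, eps_le p l]) p.cast_nonneg

lemma upperEnd_lt_lowerEnd {p l m : ℕ} (hlm : l < m) (hmp : m < p) :
    upperEnd p l < lowerEnd p m := by
  have hp : (0 : ℝ) < p := by exact_mod_cast (by omega : 0 < p)
  have hlm' : (l : ℝ) + 1 ≤ m := by exact_mod_cast hlm
  exact div_lt_div_of_pos_right (by linarith [eps_le p l, eps_le p m]) hp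

lemma upperEnd_succ_lt_lowerEnd {p l : ℕ} (hl : 1 ≤ l) (hlp : l < p) :
    upperEnd (p + 1) l < lowerEnd p l := by
  have hp : (0 : ℝ) < p := by exact_mod_cast (by omega : 0 < p)
  have key := mul_eps_succ_add_mul_eps_lt hl hlp.le
  simp only [upperEnd, lowerEnd]
  push_cast
  rw [div_lt_div_iff₀ (by positivity) hp]
  linarith

/-- Mirror image of `upperEnd_succ_lt_lowerEnd` under `l ↦ p - l`, which preserves `ε_{p,l}`. -/
lemma upperEnd_lt_lowerEnd_succ_succ {p l : ℕ} (hlp : l < p) :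
    upperEnd p l < lowerEnd (p + 1) (l + 1) := by
  have hp : (0 : ℝ) < p := by exact_mod_cast (by omega : 0 < p)
  have key := mul_eps_succ_add_mul_eps_lt (p := p) (l := p - l) (by omega) (by omega)
  rw [show p - l = p + 1 - (l + 1) by omega, eps_symm (by omega),
    show p + 1 - (l + 1) = p - l by omega, eps_symm hlp.le, Nat.cast_sub hlp.le] at key
  simp only [upperEnd, lowerEnd]
  push_cast
  rw [div_lt_div_iff₀ hp (by positivity)]
  linarith

lemma lt_of_upperEnd_lt_lowerEnd {p l q m : ℕ} (hl : 1 ≤ l) (hmq : m < q)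
    (h : upperEnd p l < lowerEnd q m) : ∀ x ∈ Jset q m, ∀ y ∈ Jset p l, x < y := by
  rw [eq_image_Icc, eq_image_Icc]
  rintro _ ⟨θ, ⟨hθ, hθ'⟩, rfl⟩ _ ⟨φ, ⟨hφ, hφ'⟩, rfl⟩
  have hφ₀ : 0 ≤ φ := (mul_nonneg (lowerEnd_nonneg hl) pi_pos.le).trans hφ
  have hθπ : θ ≤ π := hθ'.trans (mul_le_of_le_one_left pi_pos.le (upperEnd_le_one hmq))
  have hφθ : φ < θ := hφ'.trans_lt ((mul_lt_mul_of_pos_right h pi_pos).trans_le hθ)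
  linarith [cos_lt_cos_of_nonneg_of_le_pi hφ₀ hθπ hφθ]

def Separated (p l q m : ℕ) : Prop :=
  upperEnd p l < lowerEnd q m ∨ upperEnd q m < lowerEnd p l

lemma Separated.symm {p l q m : ℕ} (h : Separated p l q m) : Separated q m p l :=
  Or.symm h

lemma separated_of_ne {p l m : ℕ} (hlm : l ≠ m) (hlp : l < p) (hmp : m < p) :
    Separated p l p m := by
  rcases hlm.lt_or_gt with hlm | hml
  · exact .inl (upperEnd_lt_lowerEnd hlm hmp)
  · exact .inr (upperEnd_lt_lowerEnd hml hlp)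

lemma separated_succ {p l m : ℕ} (hl : 1 ≤ l) (hlp : l < p) :
    Separated p l (p + 1) m := by
  rcases le_or_gt m l with hml | hlm
  · exact .inr ((upperEnd_mono hml (by omega)).trans_lt (upperEnd_succ_lt_lowerEnd hl hlp))
  · exact .inl ((upperEnd_lt_lowerEnd_succ_succ hlp).trans_le (lowerEnd_mono hlm (by omega)))

lemma disjoint_of_separated {p l q m : ℕ} (hl : 1 ≤ l) (hlp : l < p) (hm : 1 ≤ m) (hmq : m < q)
    (h : Separated p l q m) : Disjoint (Jset p l) (Jset q m) := by
  refine Set.disjoint_left.2 fun x hxpl hxqm ↦ lt_irrefl x ?_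
  rcases h with h | h
  · exact lt_of_upperEnd_lt_lowerEnd hl hmq h x hxqm x hxpl
  · exact lt_of_upperEnd_lt_lowerEnd hm hlp h x hxpl x hxqm

end Jset

open Jset in
theorem Jset_interlaced_general (p : ℕ) :
    (∀ l, 1 ≤ l → l < p →
      (∀ x ∈ Jset (p + 1) (l + 1), ∀ y ∈ Jset p l, x < y) ∧
      (∀ y ∈ Jset p l, ∀ z ∈ Jset (p + 1) l, y < z)) ∧
    (Jfamily p).Pairwise Disjoint := by
  refine ⟨fun l hl hlp ↦ ⟨?_, ?_⟩, ?_⟩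
  · exact lt_of_upperEnd_lt_lowerEnd hl (by omega) (upperEnd_lt_lowerEnd_succ_succ hlp)
  · exact lt_of_upperEnd_lt_lowerEnd hl hlp (upperEnd_succ_lt_lowerEnd hl hlp)
  rintro _ (⟨l, hl, hlp, rfl⟩ | ⟨l, hl, hlp, rfl⟩) _ (⟨m, hm, hmp, rfl⟩ | ⟨m, hm, hmp, rfl⟩) hne
  all_goals refine disjoint_of_separated hl hlp hm hmp ?_
  · exact separated_of_ne (ne_of_apply_ne (Jset p) hne) hlp hmp
  · exact separated_succ hl hlp
  · exact (separated_succ hm hmp).symm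
  · exact separated_of_ne (ne_of_apply_ne (Jset (p + 1)) hne) hlp hmp

/-- For `p ≥ 2` and `1 ≤ l < p` one has the interlacing order
`J_{p+1,l+1} ≺ J_{p,l} ≺ J_{p+1,l}`; in particular the intervals of the family
`𝒥_p` are pairwise disjoint. -/
theorem Jset_interlaced (p : ℕ) (hp : 2 ≤ p) :
    (∀ l, 1 ≤ l → l < p →
      (∀ x ∈ Jset (p + 1) (l + 1), ∀ y ∈ Jset p l, x < y) ∧
      (∀ y ∈ Jset p l, ∀ z ∈ Jset (p + 1) l, y < z)) ∧
    (Jfamily p).Pairwise Disjoint :=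
  Jset_interlaced_general p
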